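/- For every integer k ≥ 1 and every i ≥ 3, the element x^(2^(i−1)) is central in G_k modulo γ_(i+1)(G_k); that is, [x^(2^(i−1)), g] ∈ γ_(i+1)(G_k) for every g ∈ G_k. -/

import Mathlib

open Subgroup

namespace P2G

/-- The commutator `[a,b] = a⁻¹ b⁻¹ a b` (left-normed convention of the paper). -/
def comm {M : Type*} [Group M] (a b : M) : M := a⁻¹ * b⁻¹ * a * b

def X : FreeGroup (Fin 2) := FreeGroup.of 0
def Y : FreeGroup (Fin 2) := FreeGroup.of 1

/-- `y_j = x^(-j) y x^j` in the free group. -/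
def yF (j : ℤ) : FreeGroup (Fin 2) := X ^ (-j) * Y * X ^ j

/-- Relations for `G_k`:
`x^(2^(k+1)) = y^4 = [x^(2^k), y] = [y^2, x] = 1` and
`[y_0,y_i]^2 = [y_0,y_i,x] = [y_0,y_i,y] = 1` for `1 ≤ i ≤ 2^(k-1)`. -/
def rels (k : ℕ) : Set (FreeGroup (Fin 2)) :=
  {X ^ 2 ^ (k + 1), Y ^ 4, comm (X ^ 2 ^ k) Y, comm (Y ^ 2) X} ∪
    ⋃ i ∈ Set.Icc 1 (2 ^ (k - 1)),
      {comm (yF 0) (yF i) ^ 2, comm (comm (yF 0) (yF i)) X, comm (comm (yF 0) (yF i)) Y}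

/-- The group `G_k`, given by the above presentation. -/
abbrev G (k : ℕ) := PresentedGroup (rels k)

/-- The generator `x` of `G_k`. -/
def x (k : ℕ) : G k := PresentedGroup.of 0

/-- The generator `y` of `G_k`. -/
def y (k : ℕ) : G k := PresentedGroup.of 1

/-- `y_j = x^(-j) y x^j` in `G_k`. -/
def yg (k : ℕ) (j : ℤ) : G k := x k ^ (-j) * y k * x k ^ j

/-- `H_k`, the normal closure of `y` in `G_k`. -/
def Hsub (k : ℕ) : Subgroup (G k) := Subgroup.normalClosure {y k}

/-- `Z_k`, the normal closure in `G_k` of `{x^(2^k), y^2} ∪ {[y_0,y_i] : 1 ≤ i ≤ 2^(k-1)}`. -/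
def Zsub (k : ℕ) : Subgroup (G k) :=
  Subgroup.normalClosure ({x k ^ 2 ^ k, y k ^ 2} ∪
    {g | ∃ i : ℕ, 1 ≤ i ∧ i ≤ 2 ^ (k - 1) ∧ g = comm (yg k 0) (yg k i)})

/-- `G_k^(2^j)`, the subgroup generated by all `2^j`-th powers of elements of `G_k`. -/
def pow2 (k j : ℕ) : Subgroup (G k) := Subgroup.closure (Set.range fun g : G k => g ^ 2 ^ j)

/-- `w = y_(2^k − 1) y_(2^k − 2) ⋯ y_1 y_0` in `G_k`. -/
def w (k : ℕ) : G k := (((List.range (2 ^ k)).reverse).map fun j => yg k j).prod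

/-- The left-normed commutator `c k i = [y, x, …(i copies of x)…, x]`; `c k 0 = y`. -/
def c (k : ℕ) : ℕ → G k
  | 0 => y k
  | i + 1 => comm (c k i) (x k)

/-- `γ_m(G_k)`, the `m`-th term of the lower central series (`γ_1 = G_k`). -/
abbrev gamma (k m : ℕ) : Subgroup (G k) := (⊤ : Subgroup (G k)).lowerCentralSeries (m - 1)


/-! If `v²` commutes with `u`, then `a = [u^n, v]` satisfies `a = (v^(u^n))⁻¹ v` with `(v^(u^n))² = v²`,
which forces `a² = [a, v]⁻¹`; together with `[u^(2n), v] = a [a, u^n] a` this pushes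
`[u^(2^m), v]` one step further down the lower central series each time `m` grows.
In `G_k` the relation `[y², x] = 1` gives this for `u = x`, `v = y`, and `x`, `y` generate `G_k`. -/

section Commutator

variable {M : Type*} [Group M]

open scoped commutatorElement

theorem comm_eq_one_iff {a b : M} : comm a b = 1 ↔ Commute a b := by
  rw [show comm a b = (b * a)⁻¹ * (a * b) by simp only [comm]; group, inv_mul_eq_one]
  exact eq_comm

theorem comm_mem_iff_commute {N : Subgroup M} [N.Normal] {a b : M} :
    comm a b ∈ N ↔ Commute (a : M ⧸ N) b := by
  rw [← QuotientGroup.eq_one_iff, ← comm_eq_one_iff]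
  simp only [comm, QuotientGroup.mk_mul, QuotientGroup.mk_inv]

theorem comm_mem_of_closure_eq_top {N : Subgroup M} [N.Normal] {S : Set M}
    (hS : closure S = ⊤) {a : M} (h : ∀ s ∈ S, comm a s ∈ N) (g : M) : comm a g ∈ N := by
  let C := (centralizer {(a : M ⧸ N)}).comap (QuotientGroup.mk' N)
  have hC : ∀ b, comm a b ∈ N ↔ b ∈ C := fun b => by
    rw [comm_mem_iff_commute, mem_comap, mem_centralizer_singleton_iff]
    exact eq_comm
  rw [hC]
  exact (closure_le C).2 (fun s hs => (hC s).1 (h s hs)) (hS ▸ mem_top g)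

theorem comm_mem_lowerCentralSeries_succ {n : ℕ} {a : M}
    (ha : a ∈ (⊤ : Subgroup M).lowerCentralSeries n) (b : M) :
    comm a b ∈ (⊤ : Subgroup M).lowerCentralSeries (n + 1) := by
  rw [show comm a b = ⁅a⁻¹, b⁻¹⁆ by simp only [comm, commutatorElement_def, inv_inv]]
  exact commutator_mem_commutator (inv_mem ha) (mem_top _)

theorem inv_mul_sq_eq_comm_inv {b c : M} (h : b ^ 2 = c ^ 2) :
    (b⁻¹ * c) ^ 2 = (comm (b⁻¹ * c) c)⁻¹ := by
  rw [eq_inv_iff_mul_eq_one]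
  calc (b⁻¹ * c) ^ 2 * comm (b⁻¹ * c) c = b⁻¹ * b⁻¹ * c ^ 2 := by simp only [comm, pow_two]; group
    _ = 1 := by rw [← h, pow_two]; group

theorem comm_pow_two_pow_mem_lowerCentralSeries {u v : M} (huv : Commute (v ^ 2) u) (m : ℕ) :
    comm (u ^ 2 ^ m) v ∈ (⊤ : Subgroup M).lowerCentralSeries (m + 1) := by
  induction m with
  | zero =>
    rw [pow_zero, pow_one]
    exact comm_mem_lowerCentralSeries_succ (mem_top u) v
  | succ m ih =>
    set a := comm (u ^ 2 ^ m) v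
    have ha_sq : a ^ 2 = (comm a v)⁻¹ := by
      have hconj_sq : ((u ^ 2 ^ m)⁻¹ * v * u ^ 2 ^ m) ^ 2 = v ^ 2 := by
        calc ((u ^ 2 ^ m)⁻¹ * v * u ^ 2 ^ m) ^ 2 = (u ^ 2 ^ m)⁻¹ * (v ^ 2 * u ^ 2 ^ m) := by
              simp only [pow_two]; group
          _ = v ^ 2 := by rw [(huv.pow_right (2 ^ m)).eq]; group
      rw [show a = ((u ^ 2 ^ m)⁻¹ * v * u ^ 2 ^ m)⁻¹ * v by simp only [a, comm]; group]
      exact inv_mul_sq_eq_comm_inv hconj_sq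
    have hdouble : comm (u ^ 2 ^ (m + 1)) v = a ^ 2 * (a⁻¹ * comm a (u ^ 2 ^ m) * a) := by
      rw [pow_succ, pow_mul]
      simp only [a, comm, pow_two]
      group
    rw [hdouble, ha_sq]
    refine mul_mem (inv_mem (comm_mem_lowerCentralSeries_succ ih v)) ?_
    simpa using (lowerCentralSeries_normal ⊤ (m + 2)).conj_mem _
      (comm_mem_lowerCentralSeries_succ ih (u ^ 2 ^ m)) a⁻¹

end Commutator

theorem commute_y_sq_x (k : ℕ) : Commute (y k ^ 2) (x k) := by
  have hrel : comm (Y ^ 2) X ∈ rels k := Set.mem_union_left _ (by simp)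
  have h : PresentedGroup.mk (rels k) (comm (Y ^ 2) X) = 1 :=
    (QuotientGroup.eq_one_iff _).2 (subset_normalClosure hrel)
  rw [← comm_eq_one_iff]
  simpa [comm, X, Y, x, y, PresentedGroup.of] using h

theorem comm_x_pow_two_pow_mem (k m : ℕ) (g : G k) :
    comm (x k ^ 2 ^ m) g ∈ (⊤ : Subgroup (G k)).lowerCentralSeries (m + 1) := by
  refine comm_mem_of_closure_eq_top (PresentedGroup.closure_range_of _) ?_ g
  rintro _ ⟨j, rfl⟩
  fin_cases j
  · change comm _ (x k) ∈ _
    rw [comm_eq_one_iff.2 ((Commute.refl (x k)).pow_left _)]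
    exact one_mem _
  · change comm _ (y k) ∈ _
    exact comm_pow_two_pow_mem_lowerCentralSeries (commute_y_sq_x k) m

theorem stmt14_general (k : ℕ) (i : ℕ) (g : G k) :
    comm (x k ^ 2 ^ (i - 1)) g ∈ gamma k (i + 1) :=
  Subgroup.lowerCentralSeries_antitone _ (by omega) (comm_x_pow_two_pow_mem k (i - 1) g)

/-- For every `k ≥ 1` and every `i ≥ 3`, the element `x^(2^(i−1))` is central
in `G_k` modulo `γ_(i+1)(G_k)`: `[x^(2^(i−1)), g] ∈ γ_(i+1)(G_k)` for every `g ∈ G_k`. -/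
theorem stmt14 (k : ℕ) (hk : 1 ≤ k) (i : ℕ) (hi : 3 ≤ i) (g : G k) :
    comm (x k ^ 2 ^ (i - 1)) g ∈ gamma k (i + 1) :=
  stmt14_general k i g

end P2G
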